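/- With γ defined as the minimal boundary size of (t,k)-neighborhoods in the d-cube, for all 1 ≤ t,k ≤ d: γ(t,k) ≥ k^t/t! − ∑_{i=1}^{t−1} (k^i / (t·(t−1)···(t−i+1))) · C(d−1, t−i−1). -/

import Mathlib

open Finset

/-- `IsNbhd d k t v N`: `N` is a `(t,k)`-neighborhood of the vertex `v` of the
`d`-cube: `{v}` for `t = 0`; otherwise a union of `(t−1,k)`-neighborhoods of
`k` distinct graph-neighbors of `v`. -/
def IsNbhd (d k : ℕ) : ℕ → (Fin d → Bool) → Finset (Fin d → Bool) → Prop
  | 0, v, N => N = {v}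
  | (t + 1), v, N =>
      ∃ W : Finset (Fin d → Bool), W.card = k ∧
        (∀ w ∈ W, hammingDist v w = 1) ∧
        ∃ f : (Fin d → Bool) → Finset (Fin d → Bool),
          (∀ w ∈ W, IsNbhd d k t w (f w)) ∧ N = W.biUnion f

/-- `gam d t k` = `γ(t,k)`: the minimum, over vertices `v` of the `d`-cube and
`(t,k)`-neighborhoods `N` of `v`, of `|{w ∈ N : dist(v,w) = t}|`. -/
noncomputable def gam (d t k : ℕ) : ℕ :=
  sInf {m : ℕ | ∃ (v : Fin d → Bool) (N : Finset (Fin d → Bool)),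
    IsNbhd d k t v N ∧ m = (N.filter (fun w => hammingDist v w = t)).card}

variable {d : ℕ}

/-- The set of coordinates where two cube vertices differ. -/
def dset (v x : Fin d → Bool) : Finset (Fin d) := {i | v i ≠ x i}

lemma hd_eq (v x : Fin d → Bool) : hammingDist v x = (dset v x).card := rfl

lemma mem_dset {v x : Fin d → Bool} {i : Fin d} : i ∈ dset v x ↔ v i ≠ x i := by
  unfold dset
  simp

lemma diffs_symmDiff (v w x : Fin d → Bool) :
    dset v x = symmDiff (dset v w) (dset w x) := by
  ext i
  simp only [mem_dset, Finset.mem_symmDiff]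
  cases hv : v i <;> cases hw : w i <;> cases hx : x i <;> simp

lemma eq_of_dsets_eq {w x x' : Fin d → Bool} (h : dset w x = dset w x') : x = x' := by
  funext i
  by_cases hi : i ∈ dset w x
  · have hi' : i ∈ dset w x' := h ▸ hi
    rw [mem_dset] at hi hi'
    cases hw : w i <;> cases hx : x i <;> cases hx' : x' i <;>
      simp_all
  · have hi' : i ∉ dset w x' := h ▸ hi
    rw [mem_dset, not_ne_iff] at hi hi'
    rw [← hi, ← hi']

/-- If `j ∈ dset w x` then `dset v x = (dset w x).erase j`, where `dset v w = {j}`. -/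
lemma diffs_of_mem {v w x : Fin d → Bool} {j : Fin d} (hvw : dset v w = {j})
    (hj : j ∈ dset w x) : dset v x = (dset w x).erase j := by
  rw [diffs_symmDiff v w x, hvw]
  ext i
  rcases eq_or_ne i j with rfl | hij
  · simp [Finset.mem_symmDiff, hj]
  · simp [Finset.mem_symmDiff, hij]

lemma diffs_of_not_mem {v w x : Fin d → Bool} {j : Fin d} (hvw : dset v w = {j})
    (hj : j ∉ dset w x) : dset v x = insert j (dset w x) := by
  rw [diffs_symmDiff v w x, hvw]
  ext i
  rcases eq_or_ne i j with rfl | hij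
  · simp [Finset.mem_symmDiff, hj]
  · simp [Finset.mem_symmDiff, hij]

/-- Dichotomy: a vertex at distance `t` from `w` is at distance `t+1` or `t-1` from `v`,
when `v,w` are adjacent. -/
lemma dist_dichotomy {v w x : Fin d → Bool} {t : ℕ} (hvw : hammingDist v w = 1)
    (hwx : hammingDist w x = t) :
    hammingDist v x = t + 1 ∨ hammingDist v x + 1 = t := by
  rw [hd_eq] at hvw hwx ⊢
  obtain ⟨j, hj⟩ := Finset.card_eq_one.1 hvw
  by_cases hmem : j ∈ dset w x
  · right
    have hc : 0 < (dset w x).card := Finset.card_pos.2 ⟨j, hmem⟩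
    rw [diffs_of_mem hj hmem, Finset.card_erase_of_mem hmem, hwx]
    omega
  · left
    rw [diffs_of_not_mem hj hmem, Finset.card_insert_of_notMem hmem, hwx]


lemma min'_eq_of_eq_singleton {α : Type*} [LinearOrder α] {s : Finset α} {j : α}
    (h : s.Nonempty) (hs : s = {j}) : s.min' h = j := by
  subst hs; exact Finset.min'_singleton j

/-- Counting the "bad" vertices: at distance `t` from `w` but distance `t-1` from `v`. -/
lemma bad_card {v w : Fin d → Bool} (hvw : hammingDist v w = 1) (t : ℕ)
    (S : Finset (Fin d → Bool))
    (hS : ∀ x ∈ S, hammingDist w x = t ∧ hammingDist v x + 1 = t) :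
    S.card ≤ (d - 1).choose (t - 1) := by
  rw [hd_eq] at hvw
  obtain ⟨j, hj⟩ := Finset.card_eq_one.1 hvw
  have key : ∀ x ∈ S, j ∈ dset w x := by
    intro x hx
    by_contra hmem
    have h1 := (hS x hx).1
    have h2 := (hS x hx).2
    rw [hd_eq] at h1 h2
    rw [diffs_of_not_mem hj hmem, Finset.card_insert_of_notMem hmem, h1] at h2
    omega
  have := Finset.card_le_card_of_injOn (fun x => (dset w x).erase j)
    (t := (Finset.univ.erase j).powersetCard (t - 1)) ?_ ?_ (s := S)
  · rwa [Finset.card_powersetCard, Finset.card_erase_of_mem (Finset.mem_univ j),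
      Finset.card_univ, Fintype.card_fin] at this
  · intro x hx
    rw [Finset.mem_coe, Finset.mem_powersetCard]
    constructor
    · intro i hi
      rw [Finset.mem_erase] at hi ⊢
      exact ⟨hi.1, Finset.mem_univ i⟩
    · have h1 := (hS x hx).1
      rw [hd_eq] at h1
      rw [Finset.card_erase_of_mem (key x hx), h1]
  · intro x hx y hy hxy
    simp only at hxy
    apply eq_of_dsets_eq (w := w)
    have hx' : dset w x = insert j ((dset w x).erase j) :=
      (Finset.insert_erase (key x hx)).symm
    have hy' : dset w y = insert j ((dset w y).erase j) :=
      (Finset.insert_erase (key y hy)).symm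
    rw [hx', hy', hxy]

/-- Fan-out: a vertex at distance `t+1` from `v` is at distance `t` from at most `t+1`
neighbors of `v`. -/
lemma fan_card {v x : Fin d → Bool} {t : ℕ} (hvx : hammingDist v x = t + 1)
    (W : Finset (Fin d → Bool)) (hW : ∀ w ∈ W, hammingDist v w = 1) :
    (W.filter fun w => hammingDist w x = t).card ≤ t + 1 := by
  have hne : (dset v x).Nonempty := by
    rw [← Finset.card_pos, ← hd_eq, hvx]; omega
  have := Finset.card_le_card_of_injOn
    (fun w => if h : (dset v w).Nonempty then (dset v w).min' h else (dset v x).min' hne)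
    (t := dset v x) ?_ ?_ (s := W.filter fun w => hammingDist w x = t)
  · rwa [← hd_eq, hvx] at this
  · intro w hw
    rw [Finset.mem_coe, Finset.mem_filter] at hw
    obtain ⟨j, hj⟩ := Finset.card_eq_one.1 ((hd_eq v w) ▸ hW w hw.1)
    have hne' : (dset v w).Nonempty := by rw [hj]; exact ⟨j, Finset.mem_singleton_self j⟩
    have hval : (if h : (dset v w).Nonempty then (dset v w).min' h else (dset v x).min' hne) = j := by
      rw [dif_pos hne']
      exact min'_eq_of_eq_singleton hne' hj
    show (if h : (dset v w).Nonempty then (dset v w).min' h else (dset v x).min' hne) ∈ dset v x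
    rw [hval]
    by_cases hmem : j ∈ dset w x
    · exfalso
      have h1 := hw.2
      rw [hd_eq] at h1
      have h2 : hammingDist v x + 1 = t := by
        rw [hd_eq, diffs_of_mem hj hmem, Finset.card_erase_of_mem hmem, h1]
        have : 0 < (dset w x).card := Finset.card_pos.2 ⟨j, hmem⟩
        omega
      omega
    · have : dset v x = insert j (dset w x) := diffs_of_not_mem hj hmem
      rw [this]; exact Finset.mem_insert_self j _
  · intro w hw w' hw' hww'
    rw [Finset.coe_filter, Set.mem_setOf_eq] at hw hw'
    obtain ⟨j, hj⟩ := Finset.card_eq_one.1 ((hd_eq v w) ▸ hW w hw.1)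
    obtain ⟨j', hj'⟩ := Finset.card_eq_one.1 ((hd_eq v w') ▸ hW w' hw'.1)
    have hne1 : (dset v w).Nonempty := by rw [hj]; exact ⟨j, Finset.mem_singleton_self j⟩
    have hne2 : (dset v w').Nonempty := by rw [hj']; exact ⟨j', Finset.mem_singleton_self j'⟩
    simp only [dif_pos hne1, dif_pos hne2] at hww'
    have hm1 := min'_eq_of_eq_singleton hne1 hj
    have hm2 := min'_eq_of_eq_singleton hne2 hj'
    apply eq_of_dsets_eq (w := v)
    rw [hj, hj']
    rw [hm1, hm2] at hww'
    rw [hww']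

/-- The closed-form lower bound. -/
noncomputable def bfun (d k t : ℕ) : ℝ :=
  (k : ℝ) ^ t / (t.factorial : ℝ) -
    ∑ i ∈ Icc 1 (t - 1),
      (k : ℝ) ^ i / (t.descFactorial i : ℝ) * ((d - 1).choose (t - i - 1) : ℝ)

lemma bfun_one (d k : ℕ) : bfun d k 1 = k := by
  simp [bfun]

lemma bfun_rec (d k t : ℕ) (ht : 1 ≤ t) :
    bfun d k (t + 1) = (k : ℝ) / (t + 1) * (bfun d k t - ((d - 1).choose (t - 1) : ℝ)) := by
  have ht0 : (t : ℝ) + 1 ≠ 0 := by positivity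
  have hfac : (t.factorial : ℝ) ≠ 0 := Nat.cast_ne_zero.2 t.factorial_ne_zero
  rw [bfun, bfun]
  rw [mul_sub, mul_sub]
  have h1 : (k : ℝ) ^ (t + 1) / ((t + 1).factorial : ℝ)
      = (k : ℝ) / (t + 1) * ((k : ℝ) ^ t / (t.factorial : ℝ)) := by
    rw [Nat.factorial_succ]
    push_cast
    field_simp
    ring
  rw [h1]
  rw [sub_sub]
  congr 1
  -- remaining: sum over Icc 1 t = (k/(t+1)) * sum over Icc 1 (t-1) + (k/(t+1)) * C(d-1,t-1)
  rw [Finset.mul_sum]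
  have hsplit : Icc 1 ((t + 1) - 1) = insert 1 (Icc 2 t) := by
    rw [Nat.add_sub_cancel]
    ext i
    simp only [Finset.mem_Icc, Finset.mem_insert]
    omega
  rw [hsplit, Finset.sum_insert (by simp)]
  have hterm1 : (k : ℝ) ^ 1 / ((t + 1).descFactorial 1 : ℝ) * ((d - 1).choose ((t + 1) - 1 - 1) : ℝ)
      = (k : ℝ) / ((t : ℝ) + 1) * ((d - 1).choose (t - 1) : ℝ) := by
    have : (t + 1).descFactorial 1 = t + 1 := by simp [Nat.descFactorial]
    rw [this]
    push_cast
    ring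
  rw [hterm1, add_comm]
  congr 1
  -- ∑_{j ∈ Icc 2 t} = ∑_{i ∈ Icc 1 (t-1)} (k/(t+1)) * term i
  rw [show Icc 2 t = Finset.image (fun i => i + 1) (Icc 1 (t - 1)) by
    ext j
    simp only [Finset.mem_Icc, Finset.mem_image]
    constructor
    · intro hj; exact ⟨j - 1, by omega, by omega⟩
    · rintro ⟨i, hi, rfl⟩; omega]
  rw [Finset.sum_image (by intro a _ b _ h; simp only at h; omega)]
  apply Finset.sum_congr rfl
  intro i hi
  rw [Finset.mem_Icc] at hi
  have hdesc : (t + 1).descFactorial (i + 1) = (t + 1) * t.descFactorial i :=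
    Nat.succ_descFactorial_succ t i
  have hdne : (t.descFactorial i : ℝ) ≠ 0 := by
    have : t.descFactorial i ≠ 0 := by
      rw [ne_eq, Nat.descFactorial_eq_zero_iff_lt]; omega
    exact_mod_cast this
  have hidx1 : (t + 1) - (i + 1) - 1 = t - i - 1 := by omega
  rw [hidx1, hdesc]
  push_cast
  field_simp
  ring

/-- Existence of `(t,k)`-neighborhoods when `k ≤ d`. -/
lemma exists_nbhd (d k : ℕ) (hkd : k ≤ d) : ∀ t (v : Fin d → Bool),
    ∃ N, IsNbhd d k t v N := by
  intro t
  induction t with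
  | zero => intro v; exact ⟨{v}, rfl⟩
  | succ t ih =>
    intro v
    obtain ⟨S, -, hScard⟩ := Finset.exists_subset_card_eq
      (s := (Finset.univ : Finset (Fin d))) (n := k)
      (by rw [Finset.card_univ, Fintype.card_fin]; exact hkd)
    refine ⟨(S.image fun j => Function.update v j (!v j)).biUnion
      (fun w => Classical.choose (ih w)), ?_⟩
    refine ⟨S.image fun j => Function.update v j (!v j), ?_, ?_, ?_⟩
    · rw [Finset.card_image_of_injOn, hScard]
      intro a _ b _ hab
      by_contra hne
      have h2 := congrFun hab a
      simp only [Function.update_self,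
        Function.update_of_ne (show a ≠ b from hne)] at h2
      exact absurd h2 (by cases v a <;> simp)
    · intro w hw
      rw [Finset.mem_image] at hw
      obtain ⟨j, -, rfl⟩ := hw
      rw [hd_eq]
      rw [show dset v (Function.update v j (!v j)) = {j} from ?_, Finset.card_singleton]
      ext i
      rcases eq_or_ne i j with rfl | hij
      · simp [mem_dset]
      · simp [mem_dset, Function.update_of_ne hij, hij]
    · exact ⟨fun w => Classical.choose (ih w), fun w _ => Classical.choose_spec (ih w), rfl⟩

lemma main_bound (d k : ℕ) :
    ∀ t, 1 ≤ t → ∀ (v : Fin d → Bool) (N : Finset (Fin d → Bool)), IsNbhd d k t v N →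
      bfun d k t ≤ ((N.filter fun x => hammingDist v x = t).card : ℝ) := by
  intro t ht
  induction t, ht using Nat.le_induction with
  | base =>
    intro v N h
    obtain ⟨W, hWc, hWadj, f, hf, hN⟩ := h
    have hfw : ∀ w ∈ W, f w = {w} := fun w hw => hf w hw
    have hNW : N = W := by
      rw [hN, Finset.biUnion_congr rfl hfw, Finset.biUnion_singleton_eq_self]
    rw [bfun_one, hNW, Finset.filter_true_of_mem hWadj, hWc]
  | succ t ht ih =>
    intro v N h
    obtain ⟨W, hWc, hWadj, f, hf, hN⟩ := h
    set F := N.filter fun x => hammingDist v x = t + 1 with hF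
    set C := (d - 1).choose (t - 1) with hC
    -- step 1: per-w bound
    have hsum1 : ∀ w ∈ W,
        ((f w).filter fun x => hammingDist w x = t).card ≤
          (F.filter fun x => x ∈ f w ∧ hammingDist w x = t).card + C := by
      intro w hw
      set A := (f w).filter fun x => hammingDist w x = t with hA
      rw [← Finset.card_filter_add_card_filter_not
          (p := fun x => hammingDist v x = t + 1) (s := A)]
      apply Nat.add_le_add
      · apply Finset.card_le_card
        intro x hx
        rw [hA, Finset.mem_filter, Finset.mem_filter] at hx
        rw [Finset.mem_filter]
        refine ⟨?_, hx.1.1, hx.1.2⟩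
        rw [hF, Finset.mem_filter]
        exact ⟨by rw [hN, Finset.mem_biUnion]; exact ⟨w, hw, hx.1.1⟩, hx.2⟩
      · apply bad_card (hWadj w hw) t
        intro x hx
        simp only [hA, Finset.mem_filter] at hx
        refine ⟨hx.1.2, ?_⟩
        rcases dist_dichotomy (hWadj w hw) hx.1.2 with h1 | h1
        · exact absurd h1 hx.2
        · exact h1
    -- step 2: double counting
    have hsum2 : ∑ w ∈ W, (F.filter fun x => x ∈ f w ∧ hammingDist w x = t).card ≤
        (t + 1) * F.card := by
      have hswap : ∑ w ∈ W, (F.filter fun x => x ∈ f w ∧ hammingDist w x = t).card =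
          ∑ x ∈ F, (W.filter fun w => x ∈ f w ∧ hammingDist w x = t).card := by
        simp_rw [Finset.card_filter]
        rw [Finset.sum_comm]
      rw [hswap]
      have hbd : ∀ x ∈ F, (W.filter fun w => x ∈ f w ∧ hammingDist w x = t).card ≤ t + 1 := by
        intro x hx
        rw [hF, Finset.mem_filter] at hx
        calc (W.filter fun w => x ∈ f w ∧ hammingDist w x = t).card
            ≤ (W.filter fun w => hammingDist w x = t).card := by
              apply Finset.card_le_card
              exact Finset.monotone_filter_right W (fun w _ hw => hw.2)
          _ ≤ t + 1 := fan_card hx.2 W hWadj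
      calc ∑ x ∈ F, (W.filter fun w => x ∈ f w ∧ hammingDist w x = t).card
          ≤ ∑ _x ∈ F, (t + 1) := Finset.sum_le_sum hbd
        _ = F.card * (t + 1) := by rw [Finset.sum_const, smul_eq_mul]
        _ = (t + 1) * F.card := mul_comm _ _
    -- step 3: induction hypothesis
    have hIH : ∀ w ∈ W, bfun d k t ≤ (((f w).filter fun x => hammingDist w x = t).card : ℝ) :=
      fun w hw => ih w (f w) (hf w hw)
    -- combine
    have hchain : (k : ℝ) * bfun d k t ≤ ((t : ℝ) + 1) * (F.card : ℝ) + (k : ℝ) * (C : ℝ) := by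
      calc (k : ℝ) * bfun d k t = ∑ _w ∈ W, bfun d k t := by
            rw [Finset.sum_const, hWc, nsmul_eq_mul]
        _ ≤ ∑ w ∈ W, (((f w).filter fun x => hammingDist w x = t).card : ℝ) :=
            Finset.sum_le_sum hIH
        _ ≤ ∑ w ∈ W, (((F.filter fun x => x ∈ f w ∧ hammingDist w x = t).card : ℝ) + (C : ℝ)) := by
            apply Finset.sum_le_sum
            intro w hw
            exact_mod_cast hsum1 w hw
        _ = (∑ w ∈ W, ((F.filter fun x => x ∈ f w ∧ hammingDist w x = t).card : ℝ))
              + (k : ℝ) * (C : ℝ) := by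
            rw [Finset.sum_add_distrib, Finset.sum_const, hWc, nsmul_eq_mul]
        _ ≤ ((t : ℝ) + 1) * (F.card : ℝ) + (k : ℝ) * (C : ℝ) := by
            apply add_le_add_left
            have := hsum2
            calc (∑ w ∈ W, ((F.filter fun x => x ∈ f w ∧ hammingDist w x = t).card : ℝ))
                = ((∑ w ∈ W, (F.filter fun x => x ∈ f w ∧ hammingDist w x = t).card : ℕ) : ℝ) :=
                  (Nat.cast_sum _ _).symm
              _ ≤ (((t + 1) * F.card : ℕ) : ℝ) := by exact_mod_cast hsum2
              _ = ((t : ℝ) + 1) * (F.card : ℝ) := by push_cast; ring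
    rw [bfun_rec d k t ht]
    rw [div_mul_eq_mul_div, div_le_iff₀ (by positivity)]
    push_cast at hchain ⊢
    linarith [hchain]

/-- for `1 ≤ t, k ≤ d`,
`γ(t,k) ≥ k^t/t! − ∑_{i=1}^{t−1} (k^i / t^{\underline{i}}) · C(d−1, t−i−1)`,
where `t^{\underline{i}} = t(t−1)⋯(t−i+1)` is the falling factorial. -/
theorem gamma_closed_form (d t k : ℕ)
    (ht1 : 1 ≤ t) (htd : t ≤ d) (hk1 : 1 ≤ k) (hkd : k ≤ d) :
    (k : ℝ) ^ t / (t.factorial : ℝ) -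
        ∑ i ∈ Icc 1 (t - 1),
          (k : ℝ) ^ i / (t.descFactorial i : ℝ) *
            ((d - 1).choose (t - i - 1) : ℝ) ≤
      (gam d t k : ℝ) := by
  have hne : {m : ℕ | ∃ (v : Fin d → Bool) (N : Finset (Fin d → Bool)),
      IsNbhd d k t v N ∧ m = (N.filter (fun w => hammingDist v w = t)).card}.Nonempty := by
    obtain ⟨N, hN⟩ := exists_nbhd d k hkd t (fun _ => false)
    exact ⟨_, (fun _ => false), N, hN, rfl⟩
  obtain ⟨v, N, hNb, heq⟩ := Nat.sInf_mem hne
  have hmain := main_bound d k t ht1 v N hNb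
  have hg : gam d t k = (N.filter (fun w => hammingDist v w = t)).card := heq
  rw [hg]
  exact hmain
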